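/- Let Σ be a finite alphabet, M a finite monoid, and μ : Σ* → M a monoid morphism. Then there exists a bound h, depending only on M, such that every nonempty word w ∈ Σ⁺ admits a μ-forest of height at most h. -/

import Mathlib

inductive Forest (A : Type) : Type
  | leaf : A → Forest A
  | node : List (Forest A) → Forest A

namespace Forest

mutual
  /-- The word spelled out by the leaves of a forest, from left to right. -/
  def word {A : Type} : Forest A → List A
    | .leaf a => [a]
    | .node l => wordList l
  def wordList {A : Type} : List (Forest A) → List A
    | [] => []
    | t :: l => t.word ++ wordList l
end

mutual
  /-- The height of a forest: maximal nesting depth of internal nodes; a leaf has height 0. -/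
  def height {A : Type} : Forest A → ℕ
    | .leaf _ => 0
    | .node l => heightList l + 1
  def heightList {A : Type} : List (Forest A) → ℕ
    | [] => 0
    | t :: l => max t.height (heightList l)
end

mutual
  /-- The paths (sequences of child indices, from the root) of the leaves of a forest,
  in left-to-right order. -/
  def leafPaths {A : Type} : Forest A → List (List ℕ)
    | .leaf _ => [[]]
    | .node l => leafPathsList 0 l
  def leafPathsList {A : Type} : ℕ → List (Forest A) → List (List ℕ)
    | _, [] => []
    | n, t :: l => (t.leafPaths.map (n :: ·)) ++ leafPathsList (n + 1) l
end

def children {A : Type} : Forest A → List (Forest A)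
  | .leaf _ => []
  | .node l => l

/-- The subtree of a forest at a given path, if it exists. -/
def subtreeAt? {A : Type} : Forest A → List ℕ → Option (Forest A)
  | F, [] => some F
  | F, n :: p =>
    match F.children[n]? with
    | some t => t.subtreeAt? p
    | none => none

end Forest

/-- `IsForest μ c F` says `F` is a `μ`-forest (`c` standing for the cardinality `|M|`):
every internal node has at least 2 children, and if it has at least 3 children then all
children evaluate under `μ` to a common value `m` with `m ^ c = m ^ (c + 1)`. -/
inductive IsForest {A M : Type} [Monoid M] (μ : List A → M) (c : ℕ) : Forest A → Prop
  | leaf (a : A) : IsForest μ c (.leaf a)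
  | node (l : List (Forest A)) (h2 : 2 ≤ l.length)
      (hrec : ∀ t ∈ l, IsForest μ c t)
      (h3 : 3 ≤ l.length →
        ∃ m : M, (∀ t ∈ l, μ t.word = m) ∧ m ^ c = m ^ (c + 1)) :
      IsForest μ c (.node l)

def IsMonoidMorphism {A M : Type} [Monoid M] (μ : List A → M) : Prop :=
  μ [] = 1 ∧ ∀ u v : List A, μ (u ++ v) = μ u * μ v

/-!
Induction on the number of elements `J`-above `μ w`. Cut `w` greedily into chunks `h ++ [a]`
whose value is `J`-below `μ w` while that of `h` is not, followed by a remainder whose value is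
not `J`-below `μ w`; the words `h` and the remainder are handled by induction.

A cut between two chunks carries the pair `(s, t)` of the values to its left and to its right.
If two cuts carry the same pair, the value `x` of the segment between them satisfies
`s * x = s`, `x * t = t` and `x ≤J s * t`; in a finite monoid this forces `x = z * s = t * z'`,
so `x` is an idempotent determined by `(s, t)`. Splitting at every cut that carries the pair of
the first cut therefore gives blocks with a common idempotent value, which become the children
of a single node, and that pair no longer occurs inside the blocks. An induction on the number
of distinct pairs thus costs three levels per pair, at most `3 |M|² + 2` levels per `J`-step.
-/

/-- Green's `J`-preorder. -/
def JLe {M : Type*} [Monoid M] (a b : M) : Prop := ∃ u v, a = u * b * v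

local infix:50 " ≤J " => JLe

section JOrder

variable {M : Type*} [Monoid M] {a b c s t x y : M}

theorem JLe.refl (a : M) : a ≤J a := ⟨1, 1, by simp⟩

theorem JLe.trans (hab : a ≤J b) (hbc : b ≤J c) : a ≤J c := by
  obtain ⟨u, v, rfl⟩ := hab
  obtain ⟨p, q, rfl⟩ := hbc
  exact ⟨u * p, q * v, by simp only [mul_assoc]⟩

theorem mul_jLe_left (a b : M) : a * b ≤J b := ⟨a, 1, by simp⟩

theorem mul_jLe_right (a b : M) : a * b ≤J a := ⟨1, b, by simp⟩

theorem ncard_setOf_jLe_lt [Finite M] (hab : a ≤J b) (hba : ¬ b ≤J a) :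
    {m | b ≤J m}.ncard < {m | a ≤J m}.ncard :=
  Set.ncard_lt_ncard ⟨fun _ hm => hab.trans hm, fun h => hba (h (JLe.refl a))⟩

theorem exists_pow_add_eq_pow [Finite M] (g : M) : ∃ a d, d ≠ 0 ∧ g ^ (a + d) = g ^ a := by
  obtain ⟨m, n, hmn, h⟩ := Finite.exists_ne_map_eq_of_infinite (g ^ · : ℕ → M)
  rcases Nat.lt_or_gt_of_ne hmn with hlt | hlt
  · exact ⟨m, n - m, by omega, by rw [Nat.add_sub_cancel' hlt.le]; exact h.symm⟩
  · exact ⟨n, m - n, by omega, by rw [Nat.add_sub_cancel' hlt.le]; exact h⟩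

theorem eq_pow_mul_mul_pow {g v : M} (h : x = g * x * v) (n : ℕ) : x = g ^ n * x * v ^ n := by
  induction n with
  | zero => simp
  | succ n ih =>
    calc x = g ^ n * (g * x * v) * v ^ n := by rwa [← h]
      _ = g ^ (n + 1) * x * v ^ (n + 1) := by rw [pow_succ, pow_succ']; simp only [mul_assoc]

theorem exists_eq_mul_of_mul_eq [Finite M] (hsx : s * x = s) (hx : x ≤J s) : ∃ z, x = z * s := by
  obtain ⟨u, v, hx⟩ := hx
  have hloop : x = (u * s) * x * v := by rw [mul_assoc u, hsx]; exact hx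
  obtain ⟨a, d, hd, hpow⟩ := exists_pow_add_eq_pow (u * s)
  have hfix : x = (u * s) ^ d * x :=
    calc x = (u * s) ^ (d + a) * x * v ^ a := by
          rw [add_comm, hpow]; exact eq_pow_mul_mul_pow hloop a
      _ = (u * s) ^ d * x := by rw [pow_add, mul_assoc, mul_assoc, ← mul_assoc _ x,
          ← eq_pow_mul_mul_pow hloop a]
  obtain ⟨d, rfl⟩ := Nat.exists_eq_succ_of_ne_zero hd
  exact ⟨(u * s) ^ d * u, by rw [hfix, pow_succ, mul_assoc, mul_assoc, hsx, mul_assoc]⟩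

theorem exists_eq_mul_of_mul_eq' [Finite M] (hxt : x * t = t) (hx : x ≤J t) : ∃ z, x = t * z := by
  obtain ⟨u, v, hx⟩ := hx
  have hloop : x = u * x * (t * v) := by rw [← mul_assoc, mul_assoc u, hxt]; exact hx
  obtain ⟨a, d, hd, hpow⟩ := exists_pow_add_eq_pow (t * v)
  have hfix : x = x * (t * v) ^ d :=
    calc x = u ^ a * x * (t * v) ^ (a + d) := by rw [hpow]; exact eq_pow_mul_mul_pow hloop a
      _ = x * (t * v) ^ d := by rw [pow_add, ← mul_assoc, ← eq_pow_mul_mul_pow hloop a]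
  obtain ⟨d, rfl⟩ := Nat.exists_eq_succ_of_ne_zero hd
  exact ⟨v * (t * v) ^ d, by rw [hfix, pow_succ', ← mul_assoc, ← mul_assoc, hxt, mul_assoc]⟩

theorem eq_of_mul_eq_of_mul_eq [Finite M] (hsx : s * x = s) (hxt : x * t = t) (hx : x ≤J s * t)
    (hsy : s * y = s) (hyt : y * t = t) (hy : y ≤J s * t) : x = y := by
  obtain ⟨z, rfl⟩ := exists_eq_mul_of_mul_eq hsx (hx.trans (mul_jLe_right s t))
  obtain ⟨z', rfl⟩ := exists_eq_mul_of_mul_eq' hyt (hy.trans (mul_jLe_left s t))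
  calc z * s = z * s * (t * z') := by rw [mul_assoc z, hsy]
    _ = t * z' := by rw [← mul_assoc, hxt]

theorem isIdempotentElem_of_mul_eq [Finite M] (hsx : s * x = s) (hx : x ≤J s) :
    IsIdempotentElem x := by
  obtain ⟨z, rfl⟩ := exists_eq_mul_of_mul_eq hsx hx
  rw [IsIdempotentElem, mul_assoc, hsx]

theorem exists_isIdempotentElem_of_mul_eq [Finite M] (X : Set M)
    (hX : ∀ x ∈ X, s * x = s ∧ x * t = t ∧ x ≤J s * t) :
    ∃ e, IsIdempotentElem e ∧ ∀ x ∈ X, x = e := by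
  rcases X.eq_empty_or_nonempty with rfl | ⟨e, he⟩
  · exact ⟨1, .one, by simp⟩
  obtain ⟨hse, het, heJ⟩ := hX e he
  refine ⟨e, isIdempotentElem_of_mul_eq hse (heJ.trans (mul_jLe_right s t)), fun x hx => ?_⟩
  obtain ⟨hsx, hxt, hxJ⟩ := hX x hx
  exact eq_of_mul_eq_of_mul_eq hsx hxt hxJ hse het heJ

end JOrder

namespace Forest

variable {A : Type}

theorem wordList_append (l₁ l₂ : List (Forest A)) :
    wordList (l₁ ++ l₂) = wordList l₁ ++ wordList l₂ := by
  induction l₁ with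
  | nil => rfl
  | cons F l ih => simp [wordList, ih]

theorem wordList_eq_flatten (l : List (Forest A)) : wordList l = (l.map word).flatten := by
  induction l with
  | nil => rfl
  | cons F l ih => simp [wordList, ih]

theorem wordList_flatten (L : List (List (Forest A))) :
    wordList L.flatten = (L.map wordList).flatten := by
  induction L with
  | nil => rfl
  | cons B L ih => simp [wordList_append, ih]

theorem wordList_map {β : Type*} {L : List β} {g : β → Forest A} {f : β → List A}
    (hg : ∀ b ∈ L, (g b).word = f b) : wordList (L.map g) = (L.map f).flatten := by
  rw [wordList_eq_flatten, List.map_map]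
  exact congrArg List.flatten (List.map_congr_left hg)

theorem heightList_le {l : List (Forest A)} {n : ℕ} (h : ∀ F ∈ l, F.height ≤ n) :
    heightList l ≤ n := by
  induction l with
  | nil => exact Nat.zero_le n
  | cons F l ih => exact max_le (h F List.mem_cons_self) (ih fun G hG => h G (.tail F hG))

theorem height_node_le {l : List (Forest A)} {n : ℕ} (h : ∀ F ∈ l, F.height ≤ n) :
    (node l).height ≤ n + 1 :=
  Nat.succ_le_succ (heightList_le h)

theorem height_pair_le {F G : Forest A} {n : ℕ} (hF : F.height ≤ n) (hG : G.height ≤ n) :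
    (node [F, G]).height ≤ n + 1 :=
  height_node_le (by simp [hF, hG])

end Forest

namespace IsForest

variable {A M : Type} [Monoid M] {μ : List A → M} {c : ℕ}

theorem pair {F G : Forest A} (hF : IsForest μ c F) (hG : IsForest μ c G) :
    IsForest μ c (.node [F, G]) :=
  .node _ le_rfl (by simp [hF, hG]) (by simp)

theorem node_of_isIdempotentElem (hc : c ≠ 0) {l : List (Forest A)} {e : M}
    (he : IsIdempotentElem e) (hl : 2 ≤ l.length) (hF : ∀ F ∈ l, IsForest μ c F ∧ μ F.word = e) :
    IsForest μ c (.node l) :=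
  .node l hl (fun F hF' => (hF F hF').1) fun _ =>
    ⟨e, fun F hF' => (hF F hF').2, by rw [he.pow_eq hc, he.pow_eq (Nat.succ_ne_zero c)]⟩

end IsForest

open Forest (wordList)

section Cuts

variable {A M : Type} [Monoid M] {μ : List A → M} {c : ℕ}

theorem IsMonoidMorphism.jLe_of_isInfix (hμ : IsMonoidMorphism μ) {u w : List A}
    (h : u <:+: w) : μ w ≤J μ u := by
  obtain ⟨p, q, rfl⟩ := h
  exact ⟨μ p, μ q, by rw [hμ.2, hμ.2]⟩

theorem IsMonoidMorphism.wordList_jLe (hμ : IsMonoidMorphism μ) {B : List (Forest A)} {j : M}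
    (hB : B ≠ []) (h : ∀ F ∈ B, μ F.word ≤J j) : μ (wordList B) ≤J j := by
  obtain ⟨F, B, rfl⟩ := List.exists_cons_of_ne_nil hB
  rw [wordList, hμ.2]
  exact (mul_jLe_right _ _).trans (h F List.mem_cons_self)

def cutPairs (μ : List A → M) (a b : M) (l : List (Forest A)) : Set (M × M) :=
  {p | ∃ l₁ l₂, l₁ ≠ [] ∧ l₂ ≠ [] ∧ l = l₁ ++ l₂ ∧
    p = (a * μ (wordList l₁), μ (wordList l₂) * b)}

theorem cutPairs_subset_append_left (hμ : IsMonoidMorphism μ) (a b : M) (l₁ l₂ : List (Forest A)) :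
    cutPairs μ a (μ (wordList l₂) * b) l₁ ⊆ cutPairs μ a b (l₁ ++ l₂) := by
  rintro p ⟨B₁, B₂, hB₁, hB₂, rfl, rfl⟩
  refine ⟨B₁, B₂ ++ l₂, hB₁, by simp [hB₂], by simp, ?_⟩
  simp [Forest.wordList_append, hμ.2, mul_assoc]

theorem cutPairs_subset_append_right (hμ : IsMonoidMorphism μ) (a b : M) (l₁ l₂ : List (Forest A)) :
    cutPairs μ (a * μ (wordList l₁)) b l₂ ⊆ cutPairs μ a b (l₁ ++ l₂) := by
  rintro p ⟨B₁, B₂, hB₁, hB₂, rfl, rfl⟩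
  refine ⟨l₁ ++ B₁, B₂, by simp [hB₁], hB₂, by simp, ?_⟩
  simp [Forest.wordList_append, hμ.2, mul_assoc]

theorem exists_split_at_cutPair (hμ : IsMonoidMorphism μ) (s t b : M) (R : List (Forest A))
    (hR : R ≠ []) (hRt : μ (wordList R) * b = t) :
    ∃ (Bs : List (List (Forest A))) (Tl : List (Forest A)), R = Bs.flatten ++ Tl ∧ Tl ≠ [] ∧
      μ (wordList Tl) * b = t ∧ cutPairs μ s b Tl ⊆ cutPairs μ s b R \ {(s, t)} ∧
      ∀ B ∈ Bs, B ≠ [] ∧ s * μ (wordList B) = s ∧ μ (wordList B) * t = t ∧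
        cutPairs μ s t B ⊆ cutPairs μ s b R \ {(s, t)} := by
  induction hn : R.length using Nat.strong_induction_on generalizing R with
  | _ n ih =>
  classical
  by_cases hcut : (s, t) ∈ cutPairs μ s b R
  swap
  · exact ⟨[], R, by simp, hR, hRt, fun p hp => ⟨hp, by rintro rfl; exact hcut hp⟩, by simp⟩
  have hex : ∃ k, ∃ R₁ R₂, R₁.length = k ∧ R₁ ≠ [] ∧ R₂ ≠ [] ∧ R = R₁ ++ R₂ ∧
      (s, t) = (s * μ (wordList R₁), μ (wordList R₂) * b) := by
    obtain ⟨R₁, R₂, h⟩ := hcut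
    exact ⟨_, R₁, R₂, rfl, h⟩
  -- split at the first cut with pair `(s, t)`, so that `R₁` has no such cut inside
  obtain ⟨R₁, R₂, hlen, hR₁, hR₂, rfl, hst⟩ := Nat.find_spec hex
  obtain ⟨hs, ht⟩ := Prod.mk.inj hst
  have hfirst : cutPairs μ s t R₁ ⊆ cutPairs μ s b (R₁ ++ R₂) \ {(s, t)} := by
    intro p hp
    refine ⟨cutPairs_subset_append_left hμ s b R₁ R₂ (ht ▸ hp), fun hpst => ?_⟩
    obtain ⟨B₁, B₂, hB₁, hB₂, rfl, hp⟩ := hp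
    obtain ⟨hs', ht'⟩ := Prod.mk.inj (hp.symm.trans hpst)
    have := Nat.find_min' hex ⟨B₁, B₂ ++ R₂, rfl, hB₁, by simp [hR₂], by simp,
      Prod.ext hs'.symm (by rw [Forest.wordList_append, hμ.2, mul_assoc, ← ht, ht'])⟩
    have := List.length_pos_iff.2 hB₂
    simp only [List.length_append] at hlen
    omega
  have hrest : cutPairs μ s b R₂ ⊆ cutPairs μ s b (R₁ ++ R₂) := by
    simpa only [← hs] using cutPairs_subset_append_right hμ s b R₁ R₂
  obtain ⟨Bs, Tl, rfl, hTl, hTlt, hTlcut, hBs⟩ :=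
    ih _ (by simp [← hn, List.length_pos_iff.2 hR₁]) R₂ hR₂ ht.symm rfl
  refine ⟨R₁ :: Bs, Tl, by simp, hTl, hTlt, hTlcut.trans (Set.sdiff_subset_sdiff_left hrest), ?_⟩
  rintro B (_ | ⟨_, hB⟩)
  · refine ⟨hR₁, hs.symm, ?_, hfirst⟩
    conv_lhs => rw [ht, ← mul_assoc, ← hμ.2, ← Forest.wordList_append, hRt]
  · obtain ⟨hB, hsB, hBt, hBcut⟩ := hBs B hB
    exact ⟨hB, hsB, hBt, hBcut.trans (Set.sdiff_subset_sdiff_left hrest)⟩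

theorem exists_forest_of_blocks (hc : c ≠ 0) {e : M} (he : IsIdempotentElem e) {H : ℕ}
    (Bs : List (List (Forest A))) (hBs : Bs ≠ [])
    (hG : ∀ B ∈ Bs, ∃ G, IsForest μ c G ∧ G.word = wordList B ∧ G.height ≤ H ∧ μ G.word = e) :
    ∃ G, IsForest μ c G ∧ G.word = wordList Bs.flatten ∧ G.height ≤ H + 1 := by
  have : Nonempty (Forest A) := ⟨.node []⟩
  choose! g hg using hG
  rcases Bs with _ | ⟨B, _ | ⟨B', Bs⟩⟩
  · exact absurd rfl hBs
  · obtain ⟨hgB, hgw, hgh, -⟩ := hg B List.mem_cons_self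
    exact ⟨g B, hgB, by simpa using hgw, by omega⟩
  · refine ⟨.node ((B :: B' :: Bs).map g), ?_, by
      rw [Forest.word, Forest.wordList_map fun B hB => (hg B hB).2.1, Forest.wordList_flatten],
      Forest.height_node_le (by simpa using fun B hB => (hg B hB).2.2.1)⟩
    refine IsForest.node_of_isIdempotentElem hc he (by simp) ?_
    simp only [List.mem_map]
    rintro _ ⟨B, hB, rfl⟩
    exact ⟨(hg B hB).1, (hg B hB).2.2.2⟩

theorem exists_forest_cons_flatten_append (hc : c ≠ 0) {e : M} (he : IsIdempotentElem e)
    {H : ℕ} {F T : Forest A} (hF : IsForest μ c F) (hFh : F.height ≤ H) (hT : IsForest μ c T)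
    (hTh : T.height ≤ H) (Bs : List (List (Forest A)))
    (hG : ∀ B ∈ Bs, ∃ G, IsForest μ c G ∧ G.word = wordList B ∧ G.height ≤ H ∧ μ G.word = e) :
    ∃ G, IsForest μ c G ∧ G.word = F.word ++ (wordList Bs.flatten ++ T.word) ∧
      G.height ≤ H + 3 := by
  rcases eq_or_ne Bs [] with rfl | hBs
  · exact ⟨.node [F, T], hF.pair hT, by simp [Forest.word, wordList],
      (Forest.height_pair_le hFh hTh).trans (by omega)⟩
  obtain ⟨G, hG, hGw, hGh⟩ := exists_forest_of_blocks hc he Bs hBs hG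
  refine ⟨.node [F, .node [G, T]], hF.pair (hG.pair hT), by simp [Forest.word, wordList, hGw], ?_⟩
  exact Forest.height_pair_le (hFh.trans (by omega))
    (Forest.height_pair_le hGh (hTh.trans (by omega)))

theorem exists_forest_height_le_ncard_cutPairs [Finite M] (hμ : IsMonoidMorphism μ) (hc : c ≠ 0)
    {H : ℕ} (a b : M) (Fs : List (Forest A)) (hne : Fs ≠ [])
    (hFs : ∀ F ∈ Fs, IsForest μ c F ∧ F.height ≤ H ∧ μ F.word ≤J a * μ (wordList Fs) * b) :
    ∃ F, IsForest μ c F ∧ F.word = wordList Fs ∧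
      F.height ≤ H + 3 * (cutPairs μ a b Fs).ncard := by
  induction hn : (cutPairs μ a b Fs).ncard using Nat.strong_induction_on generalizing a b Fs with
  | _ n ih =>
  obtain ⟨F, R, rfl⟩ := List.exists_cons_of_ne_nil hne
  obtain ⟨hF, hFh, -⟩ := hFs F List.mem_cons_self
  rcases eq_or_ne R [] with rfl | hR
  · exact ⟨F, hF, by simp [wordList], by omega⟩
  set s := a * μ F.word
  set t := μ (wordList R) * b
  have hst : a * μ (wordList (F :: R)) * b = s * t := by
    simp only [s, t, wordList, hμ.2, mul_assoc]
  have hπ : (s, t) ∈ cutPairs μ a b (F :: R) := ⟨[F], R, by simp, hR, rfl, by simp [s, t, wordList]⟩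
  have hsub : cutPairs μ s b R ⊆ cutPairs μ a b (F :: R) := by
    simpa [wordList] using cutPairs_subset_append_right hμ a b [F] R
  have hblock : ∀ a' b' B, B ≠ [] → (∀ G ∈ B, G ∈ R) → a' * μ (wordList B) * b' = s * t →
      cutPairs μ a' b' B ⊆ cutPairs μ s b R \ {(s, t)} →
      ∃ G, IsForest μ c G ∧ G.word = wordList B ∧ G.height ≤ H + 3 * (n - 1) := by
    intro a' b' B hB hBR hctx hcut
    have hlt : (cutPairs μ a' b' B).ncard < n := hn ▸
      (Set.ncard_le_ncard (hcut.trans (Set.sdiff_subset_sdiff_left hsub))).trans_lt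
        (Set.ncard_sdiff_singleton_lt_of_mem hπ)
    have hBFs : ∀ G ∈ B, IsForest μ c G ∧ G.height ≤ H ∧ μ G.word ≤J a' * μ (wordList B) * b' :=
      fun G hG => hctx ▸ hst ▸ hFs G (.tail F (hBR G hG))
    obtain ⟨G, hG, hGw, hGh⟩ := ih _ hlt a' b' B hB hBFs rfl
    exact ⟨G, hG, hGw, hGh.trans (by omega)⟩
  obtain ⟨Bs, Tl, hR_eq, hTl, hTlt, hTlcut, hBs⟩ := exists_split_at_cutPair hμ s t b R hR rfl
  have hBR : ∀ B ∈ Bs, ∀ G ∈ B, G ∈ R := fun B hB G hG =>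
    hR_eq ▸ List.mem_append_left _ (List.mem_flatten_of_mem hB hG)
  obtain ⟨e, he, hBe⟩ := exists_isIdempotentElem_of_mul_eq (s := s) (t := t)
    {x | ∃ B ∈ Bs, μ (wordList B) = x} <| by
      rintro _ ⟨B, hB, rfl⟩
      obtain ⟨hB', hsB, hBt, -⟩ := hBs B hB
      exact ⟨hsB, hBt, hμ.wordList_jLe hB' fun G hG => hst ▸ (hFs G (.tail F (hBR B hB G hG))).2.2⟩
  obtain ⟨T, hT, hTw, hTh⟩ := hblock s b Tl hTl (fun G hG => by simp [hR_eq, hG])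
    (by rw [mul_assoc, hTlt]) hTlcut
  obtain ⟨G, hG, hGw, hGh⟩ := exists_forest_cons_flatten_append hc he hF (hFh.trans le_self_add) hT
    hTh Bs fun B hB => by
      obtain ⟨hB', hsB, hBt, hBcut⟩ := hBs B hB
      obtain ⟨G, hG, hGw, hGh⟩ := hblock s t B hB' (hBR B hB) (by rw [hsB]) hBcut
      exact ⟨G, hG, hGw, hGh, hGw ▸ hBe _ ⟨B, hB, rfl⟩⟩
  refine ⟨G, hG, by rw [hGw, hTw, wordList, hR_eq, Forest.wordList_append], ?_⟩
  have : 0 < n := hn ▸ (Set.ncard_pos (Set.toFinite _)).2 ⟨_, hπ⟩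
  omega

theorem exists_forest_flatten [Finite M] (hμ : IsMonoidMorphism μ) (hc : c ≠ 0) {H : ℕ}
    (a b : M) (cs : List (List A)) (hcs : cs ≠ [])
    (h : ∀ u ∈ cs, (∃ G, IsForest μ c G ∧ G.word = u ∧ G.height ≤ H) ∧
      μ u ≤J a * μ cs.flatten * b) :
    ∃ F, IsForest μ c F ∧ F.word = cs.flatten ∧ F.height ≤ H + 3 * Nat.card (M × M) := by
  have : Nonempty (Forest A) := ⟨.node []⟩
  choose! g hg using fun u hu => (h u hu).1
  have hword : wordList (cs.map g) = cs.flatten := by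
    simpa using Forest.wordList_map fun u hu => (hg u hu).2.1
  obtain ⟨F, hF, hFw, hFh⟩ := exists_forest_height_le_ncard_cutPairs hμ hc a b (cs.map g)
    (by simpa using hcs) <| by
      simp only [List.mem_map]
      rintro _ ⟨u, hu, rfl⟩
      obtain ⟨hG, hGw, hGh⟩ := hg u hu
      exact ⟨hG, hGh, by rw [hGw, hword]; exact (h u hu).2⟩
  have := Set.ncard_le_card (cutPairs μ a b (cs.map g))
  exact ⟨F, hF, hFw.trans hword, by omega⟩

end Cuts

theorem exists_greedy_factorization {α : Type*} (P : List α → Prop) (v : List α) :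
    ∃ (cs : List (List α)) (tl : List α), v = cs.flatten ++ tl ∧ (tl = [] ∨ ¬ P tl) ∧
      ∀ u ∈ cs, P u ∧ ∃ h a, u = h ++ [a] ∧ (h = [] ∨ ¬ P h) := by
  induction v using List.reverseRecOn with
  | nil => exact ⟨[], [], rfl, .inl rfl, by simp⟩
  | append_singleton v a ih =>
    obtain ⟨cs, tl, rfl, htl, hcs⟩ := ih
    by_cases hP : P (tl ++ [a])
    · refine ⟨cs ++ [tl ++ [a]], [], by simp, .inl rfl, ?_⟩
      simp only [List.mem_append, List.mem_singleton]
      rintro u (hu | rfl)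
      exacts [hcs u hu, ⟨hP, tl, a, rfl, htl⟩]
    · exact ⟨cs, tl ++ [a], by simp, .inr hP, hcs⟩

section Main

variable {A M : Type} [Monoid M] {μ : List A → M} {c : ℕ}

theorem exists_forest_append_singleton {H : ℕ} (h : List A) (a : A)
    (hh : h ≠ [] → ∃ F, IsForest μ c F ∧ F.word = h ∧ F.height ≤ H) :
    ∃ F, IsForest μ c F ∧ F.word = h ++ [a] ∧ F.height ≤ H + 1 := by
  rcases eq_or_ne h [] with rfl | hne
  · exact ⟨.leaf a, .leaf a, rfl, Nat.zero_le _⟩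
  obtain ⟨F, hF, hFw, hFh⟩ := hh hne
  exact ⟨.node [F, .leaf a], hF.pair (.leaf a), by simp [Forest.word, wordList, hFw],
    Forest.height_pair_le hFh (Nat.zero_le _)⟩

theorem exists_forest_height_le [Finite M] (hμ : IsMonoidMorphism μ) (hc : c ≠ 0) (n : ℕ) :
    ∀ w : List A, w ≠ [] → {m | μ w ≤J m}.ncard ≤ n →
      ∃ F, IsForest μ c F ∧ F.word = w ∧ F.height ≤ (3 * Nat.card (M × M) + 2) * n := by
  induction n with
  | zero =>
    intro w _ hw
    have := (Set.ncard_pos (s := {m | μ w ≤J m}) (Set.toFinite _)).2 ⟨μ w, JLe.refl _⟩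
    omega
  | succ n ih =>
  intro w hw hwn
  set K := Nat.card (M × M)
  have hhigh : ∀ v, v ≠ [] → v <:+: w → ¬ μ v ≤J μ w →
      ∃ F, IsForest μ c F ∧ F.word = v ∧ F.height ≤ (3 * K + 2) * n := fun v hv hvw hvJ =>
    ih v hv (by have := ncard_setOf_jLe_lt (hμ.jLe_of_isInfix hvw) hvJ; omega)
  obtain ⟨cs, tl, hw_eq, htl, hcs⟩ := exists_greedy_factorization (fun u => μ u ≤J μ w) w
  have hchunk : ∀ u ∈ cs, ∃ G, IsForest μ c G ∧ G.word = u ∧ G.height ≤ (3 * K + 2) * n + 1 := by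
    intro u hu
    obtain ⟨-, h, a, rfl, hh⟩ := hcs u hu
    have hhw : h <:+: w := hw_eq ▸ ((List.prefix_append h [a]).isInfix.trans
      (List.infix_of_mem_flatten hu)).trans (List.prefix_append _ tl).isInfix
    exact exists_forest_append_singleton h a fun hne => hhigh h hne hhw (hh.resolve_left hne)
  have hcs_ne : cs ≠ [] := by
    rintro rfl
    rw [List.flatten_nil, List.nil_append] at hw_eq
    exact htl.elim (fun h => hw (hw_eq.trans h)) fun h => h (hw_eq ▸ JLe.refl _)
  obtain ⟨Fc, hFc, hFcw, hFch⟩ := exists_forest_flatten hμ hc 1 (μ tl) cs hcs_ne fun u hu =>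
    ⟨hchunk u hu, by rw [one_mul, ← hμ.2, ← hw_eq]; exact (hcs u hu).1⟩
  rcases eq_or_ne tl [] with rfl | htl_ne
  · refine ⟨Fc, hFc, by rw [hFcw, hw_eq, List.append_nil], ?_⟩
    rw [Nat.mul_succ]
    omega
  have htlw : tl <:+: w := hw_eq ▸ List.suffix_append _ tl |>.isInfix
  obtain ⟨Ft, hFt, hFtw, hFth⟩ := hhigh tl htl_ne htlw (htl.resolve_left htl_ne)
  refine ⟨.node [Fc, Ft], hFc.pair hFt, by simp [Forest.word, wordList, hFcw, hFtw, hw_eq], ?_⟩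
  refine (Forest.height_pair_le (n := (3 * K + 2) * n + 3 * K + 1) (by omega) (by omega)).trans ?_
  rw [Nat.mul_succ]
  omega

end Main

theorem stmt3 {M : Type} [Monoid M] [Fintype M] :
    ∃ h : ℕ, ∀ (A : Type) [Fintype A] (μ : List A → M), IsMonoidMorphism μ →
      ∀ w : List A, w ≠ [] →
        ∃ F : Forest A, IsForest μ (Fintype.card M) F ∧ F.word = w ∧ F.height ≤ h :=
  ⟨(3 * Nat.card (M × M) + 2) * Nat.card M, fun _ _ _ hμ w hw =>
    exists_forest_height_le hμ Fintype.card_ne_zero _ w hw (Set.ncard_le_card _)⟩
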